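/- Reduction from two-counter machines to type equality: for every two-counter machine M with instructions ι₁,…,ι_m and all natural numbers m₀, n₀, construct (in the signature described in the context) the indexed type names T_i[c₁,c₂] and T_i′[c₁,c₂]; then T₁[m₀, n₀] ≡ T₁′[m₀, n₀] if and only if the computation of M starting from configuration (1, m₀, n₀) is infinite (i.e., M does not halt). -/

import Mathlib

/-! Arithmetic expressions and Presburger propositions over natural numbers,
with de Bruijn index variables. -/

inductive AExp : Type
  | const : ℕ → AExp
  | var : ℕ → AExp
  | add : AExp → AExp → AExp
  | sub : AExp → AExp → AExp
  | mul : ℕ → AExp → AExp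
deriving DecidableEq

namespace AExp

def eval (σ : ℕ → ℕ) : AExp → ℕ
  | const n => n
  | var n => σ n
  | add a b => a.eval σ + b.eval σ
  | sub a b => a.eval σ - b.eval σ
  | mul k a => k * a.eval σ

def subst (τ : ℕ → AExp) : AExp → AExp
  | const n => const n
  | var n => τ n
  | add a b => add (a.subst τ) (b.subst τ)
  | sub a b => sub (a.subst τ) (b.subst τ)
  | mul k a => mul k (a.subst τ)

def hasVar : AExp → Bool
  | const _ => false
  | var _ => true
  | add a b => a.hasVar || b.hasVar
  | sub a b => a.hasVar || b.hasVar
  | mul _ a => a.hasVar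

/-- Normalization: a closed arithmetic expression is replaced by its value. -/
def norm (e : AExp) : AExp := if e.hasVar then e else .const (e.eval (fun _ => 0))

/-- Substitution followed by normalization of closed expressions to their values. -/
def substN (τ : ℕ → AExp) (e : AExp) : AExp := (e.subst τ).norm

/-- All variables of `e` are `< k`. -/
def ClosedAt (k : ℕ) : AExp → Prop
  | const _ => True
  | var n => n < k
  | add a b => a.ClosedAt k ∧ b.ClosedAt k
  | sub a b => a.ClosedAt k ∧ b.ClosedAt k
  | mul _ a => a.ClosedAt k

end AExp

/-- Cons for substitutions/assignments. -/
def scons {α : Type*} (i : α) (σ : ℕ → α) : ℕ → α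
  | 0 => i
  | n + 1 => σ n

/-- Lifting a substitution under a binder. -/
def liftτ (τ : ℕ → AExp) : ℕ → AExp :=
  scons (AExp.var 0) (fun n => (τ n).subst (fun k => AExp.var (k + 1)))

inductive AProp : Type
  | aeq : AExp → AExp → AProp
  | agt : AExp → AExp → AProp
  | tt : AProp
  | ff : AProp
  | conj : AProp → AProp → AProp
  | disj : AProp → AProp → AProp
  | neg : AProp → AProp
  | aexists : AProp → AProp
  | aforall : AProp → AProp

namespace AProp

def holds (σ : ℕ → ℕ) : AProp → Prop
  | aeq a b => a.eval σ = b.eval σ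
  | agt a b => b.eval σ < a.eval σ
  | tt => True
  | ff => False
  | conj φ ψ => φ.holds σ ∧ ψ.holds σ
  | disj φ ψ => φ.holds σ ∨ ψ.holds σ
  | neg φ => ¬ φ.holds σ
  | aexists φ => ∃ i : ℕ, φ.holds (scons i σ)
  | aforall φ => ∀ i : ℕ, φ.holds (scons i σ)

def subst (τ : ℕ → AExp) : AProp → AProp
  | aeq a b => aeq (a.subst τ) (b.subst τ)
  | agt a b => agt (a.subst τ) (b.subst τ)
  | tt => tt
  | ff => ff
  | conj φ ψ => conj (φ.subst τ) (ψ.subst τ)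
  | disj φ ψ => disj (φ.subst τ) (ψ.subst τ)
  | neg φ => neg (φ.subst τ)
  | aexists φ => aexists (φ.subst (liftτ τ))
  | aforall φ => aforall (φ.subst (liftτ τ))

def ClosedAt (k : ℕ) : AProp → Prop
  | aeq a b => a.ClosedAt k ∧ b.ClosedAt k
  | agt a b => a.ClosedAt k ∧ b.ClosedAt k
  | tt => True
  | ff => True
  | conj φ ψ => φ.ClosedAt k ∧ ψ.ClosedAt k
  | disj φ ψ => φ.ClosedAt k ∧ ψ.ClosedAt k
  | neg φ => φ.ClosedAt k
  | aexists φ => φ.ClosedAt (k + 1)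
  | aforall φ => φ.ClosedAt (k + 1)

end AProp

/-! Session types.  Labeled choices are represented by association lists of
labels (natural numbers) and types.  Quantifiers bind a de Bruijn index
variable. -/

inductive STy : Type
  | ichoice : List (ℕ × STy) → STy                -- ⊕{ℓ : A_ℓ}
  | echoice : List (ℕ × STy) → STy                -- &{ℓ : A_ℓ}
  | tensor : STy → STy → STy                      -- A ⊗ B
  | lolli : STy → STy → STy                       -- A ⊸ B
  | one : STy                                     -- 1
  | tname : ℕ → List AExp → STy                   -- V[ē]
  | sassert : AProp → STy → STy                   -- ?{φ}. A
  | sassume : AProp → STy → STy                   -- !{φ}. A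
  | sexists : STy → STy                           -- ?n. A
  | sforall : STy → STy                           -- !n. A

namespace STy

/-- Substitution of arithmetic expressions for index variables in a session type. -/
def subst (τ : ℕ → AExp) : STy → STy
  | ichoice L => ichoice (L.attach.map (fun p => (p.1.1, p.1.2.subst τ)))
  | echoice L => echoice (L.attach.map (fun p => (p.1.1, p.1.2.subst τ)))
  | tensor A B => tensor (A.subst τ) (B.subst τ)
  | lolli A B => lolli (A.subst τ) (B.subst τ)
  | one => one
  | tname v es => tname v (es.map (AExp.substN τ))
  | sassert φ A => sassert (φ.subst τ) (A.subst τ)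
  | sassume φ A => sassume (φ.subst τ) (A.subst τ)
  | sexists A => sexists (A.subst (liftτ τ))
  | sforall A => sforall (A.subst (liftτ τ))
decreasing_by
  all_goals simp_wf
  all_goals try omega
  all_goals
    (obtain ⟨⟨l, A⟩, hp⟩ := p
     have h := List.sizeOf_lt_of_mem hp
     simp [Prod.mk.sizeOf_spec] at h ⊢
     omega)

/-- Substituting a number for the index variable bound by a quantifier. -/
def subst0 (i : ℕ) (A : STy) : STy := A.subst (scons (AExp.const i) AExp.var)

/-- Ground instantiation of all free index variables by natural numbers. -/
def substC (σ : ℕ → ℕ) (A : STy) : STy := A.subst (fun n => AExp.const (σ n))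

/-- All free index variables of the type are below `k`. -/
inductive ClosedAt : ℕ → STy → Prop
  | ichoice {k L} : (∀ p ∈ L, ClosedAt k p.2) → ClosedAt k (ichoice L)
  | echoice {k L} : (∀ p ∈ L, ClosedAt k p.2) → ClosedAt k (echoice L)
  | tensor {k A B} : ClosedAt k A → ClosedAt k B → ClosedAt k (tensor A B)
  | lolli {k A B} : ClosedAt k A → ClosedAt k B → ClosedAt k (lolli A B)
  | one {k} : ClosedAt k one
  | tname {k v es} : (∀ e ∈ es, e.ClosedAt k) → ClosedAt k (tname v es)
  | sassert {k φ A} : φ.ClosedAt k → ClosedAt k A → ClosedAt k (sassert φ A)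
  | sassume {k φ A} : φ.ClosedAt k → ClosedAt k A → ClosedAt k (sassume φ A)
  | sexists {k A} : ClosedAt (k + 1) A → ClosedAt k (sexists A)
  | sforall {k A} : ClosedAt (k + 1) A → ClosedAt k (sforall A)

/-- A closed session type: no free index variables. -/
def Closed (A : STy) : Prop := ClosedAt 0 A

def isName : STy → Prop
  | tname _ _ => True
  | _ => False

end STy

/-- A signature is a finite list of type definitions; the type name `v` is
defined by the `v`-th entry (whose free index variables `0, …` are the
parameters `n̄`). -/
abbrev Sig : Type := List STy

/-- A contractive signature: no definition body is itself a type name. -/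
def Contractive (Sg : Sig) : Prop := ∀ B ∈ Sg, ¬ B.isName

/-- Unfolding of a type: a type name is replaced by its instantiated
definition; all other types are returned unchanged. -/
def unfoldT (Sg : Sig) : STy → STy
  | .tname v es => (Sg.getD v .one).subst (fun n => es.getD n (.const 0))
  | A => A

/-- The default (empty) assignment; used to evaluate closed propositions
in the standard model. -/
def σ0 : ℕ → ℕ := fun _ => 0

/-- Componentwise matching of labeled alternatives by a relation. -/
def MatchAlts (R : STy → STy → Prop) (L L' : List (ℕ × STy)) : Prop :=
  List.Forall₂ (fun p q => p.1 = q.1 ∧ R p.2 q.2) L L'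

/-- `R` is a type bisimulation (Definition of type bisimulation). -/
def IsBisim (Sg : Sig) (R : STy → STy → Prop) : Prop :=
  ∀ ⦃A B : STy⦄, R A B →
    (∀ L, unfoldT Sg A = .ichoice L →
      ∃ L', unfoldT Sg B = .ichoice L' ∧ MatchAlts R L L') ∧
    (∀ L, unfoldT Sg A = .echoice L →
      ∃ L', unfoldT Sg B = .echoice L' ∧ MatchAlts R L L') ∧
    (∀ A₁ A₂, unfoldT Sg A = .tensor A₁ A₂ →
      ∃ B₁ B₂, unfoldT Sg B = .tensor B₁ B₂ ∧ R A₁ B₁ ∧ R A₂ B₂) ∧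
    (∀ A₁ A₂, unfoldT Sg A = .lolli A₁ A₂ →
      ∃ B₁ B₂, unfoldT Sg B = .lolli B₁ B₂ ∧ R A₁ B₁ ∧ R A₂ B₂) ∧
    (unfoldT Sg A = .one → unfoldT Sg B = .one) ∧
    (∀ φ A', unfoldT Sg A = .sassert φ A' →
      ∃ ψ B', unfoldT Sg B = .sassert ψ B' ∧
        ((φ.holds σ0 ∧ ψ.holds σ0 ∧ R A' B') ∨ (¬ φ.holds σ0 ∧ ¬ ψ.holds σ0))) ∧
    (∀ φ A', unfoldT Sg A = .sassume φ A' →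
      ∃ ψ B', unfoldT Sg B = .sassume ψ B' ∧
        ((φ.holds σ0 ∧ ψ.holds σ0 ∧ R A' B') ∨ (¬ φ.holds σ0 ∧ ¬ ψ.holds σ0))) ∧
    (∀ A', unfoldT Sg A = .sexists A' →
      ∃ B', unfoldT Sg B = .sexists B' ∧ ∀ i : ℕ, R (A'.subst0 i) (B'.subst0 i)) ∧
    (∀ A', unfoldT Sg A = .sforall A' →
      ∃ B', unfoldT Sg B = .sforall B' ∧ ∀ i : ℕ, R (A'.subst0 i) (B'.subst0 i))

/-- Type equality: `A ≡ B` iff some type bisimulation relates them. -/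
def TpEq (Sg : Sig) (A B : STy) : Prop :=
  ∃ R : STy → STy → Prop, IsBisim Sg R ∧ R A B

/-- The quantified judgment `∀V. C ⇒ A ≡ B`. -/
def EqUnder (Sg : Sig) (C : AProp) (A B : STy) : Prop :=
  ∀ σ : ℕ → ℕ, C.holds σ → TpEq Sg (A.substC σ) (B.substC σ)

/-! Statement 4: reduction from two-counter machines to type equality. -/

/-- Instructions of a two-counter machine.  The Boolean selects the counter:
`false` is counter 1, `true` is counter 2.  Instruction numbers are 1-based. -/
inductive Instr : Type
  | inc : Bool → ℕ → Instr            -- inc(c_j); goto k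
  | jzdec : Bool → ℕ → ℕ → Instr      -- if c_j = 0 goto k else dec(c_j); goto l
  | halt : Instr

/-- A configuration: current instruction number and the two counter values. -/
abbrev MConfig : Type := ℕ × ℕ × ℕ

/-- One step of the two-counter machine `M`; `none` if there is no successor
configuration (in particular at a `halt` instruction). -/
def stepM (M : List Instr) : MConfig → Option MConfig
  | (i, c₁, c₂) =>
    match M[i - 1]? with
    | none => none
    | some .halt => none
    | some (.inc b k) =>
        some (k, if b then c₁ else c₁ + 1, if b then c₂ + 1 else c₂)
    | some (.jzdec b k l) =>
        if b then
          (if c₂ = 0 then some (k, c₁, c₂) else some (l, c₁, c₂ - 1))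
        else
          (if c₁ = 0 then some (k, c₁, c₂) else some (l, c₁ - 1, c₂))

/-- Iterated machine steps. -/
def iterM (M : List Instr) : ℕ → MConfig → Option MConfig
  | 0, cfg => some cfg
  | n + 1, cfg => (stepM M cfg).bind (iterM M n)

/-- Well-formed instructions of a machine with `m` instructions: all goto
targets lie in {1, …, m}. -/
def WFInstr (m : ℕ) : Instr → Prop
  | .inc _ k => 1 ≤ k ∧ k ≤ m
  | .jzdec _ k l => (1 ≤ k ∧ k ≤ m) ∧ (1 ≤ l ∧ l ≤ m)
  | .halt => True

/-! The reduction.  Type names are numbered as follows: name 0 is `T_inf`,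
name 1 is `T_inf′`, and for instruction `i` (1 ≤ i ≤ m), name `2*i` is
`T_i[c₁,c₂]` and name `2*i+1` is `T_i′[c₁,c₂]` (with parameters `c₁ = var 0`,
`c₂ = var 1`).  Labels: `ℓ = 0`, `ℓ′ = 1`, `inc₁ = 2`, `inc₂ = 3`,
`zero₁ = 4`, `dec₁ = 5`, `zero₂ = 6`, `dec₂ = 7`. -/

/-- The name of `T_k` (if `pr = false`) resp. `T_k′` (if `pr = true`). -/
def nameOf (pr : Bool) (k : ℕ) : ℕ := 2 * k + (if pr then 1 else 0)

/-- The body of the definition of `T_i[c₁,c₂]` (or `T_i′[c₁,c₂]` when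
`pr = true`) for instruction `ι_i`.  For `halt`, the body of `T_inf`
(resp. `T_inf′`) is inlined to keep the definition contractive. -/
def instrBody (pr : Bool) : Instr → STy
  | .inc b k =>
      if b then
        .ichoice [(3, .tname (nameOf pr k) [.var 0, .add (.var 1) (.const 1)])]
      else
        .ichoice [(2, .tname (nameOf pr k) [.add (.var 0) (.const 1), .var 1])]
  | .jzdec b k l =>
      if b then
        .ichoice
          [(6, .sassert (.aeq (.var 1) (.const 0))
                 (.tname (nameOf pr k) [.var 0, .var 1])),
           (7, .sassert (.agt (.var 1) (.const 0))
                 (.tname (nameOf pr l) [.var 0, .sub (.var 1) (.const 1)]))]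
      else
        .ichoice
          [(4, .sassert (.aeq (.var 0) (.const 0))
                 (.tname (nameOf pr k) [.var 0, .var 1])),
           (5, .sassert (.agt (.var 0) (.const 0))
                 (.tname (nameOf pr l) [.sub (.var 0) (.const 1), .var 1]))]
  | .halt =>
      if pr then .ichoice [(1, .tname 1 [])] else .ichoice [(0, .tname 0 [])]

/-- The signature of the reduction: `T_inf`, `T_inf′`, and `T_i`, `T_i′` for
each instruction `ι_i` of the machine. -/
def sigOf (M : List Instr) : Sig :=
  [.ichoice [(0, .tname 0 [])], .ichoice [(1, .tname 1 [])]] ++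
    (M.map (fun ins => [instrBody false ins, instrBody true ins])).flatten

/-! Along a non-halting run, the pairs `(T_i[c̄], T_i′[c̄])` of the configurations reached,
together with the assertion pairs `(?{φ}. T_j[d̄], ?{φ}. T_j′[d̄])` in their unfoldings, form a
bisimulation: an enabled branch of the current instruction leads to the successor configuration,
and a false assertion is matched vacuously. Conversely, `T_i[c̄]` and `T_i′[c̄]` unfold alike up to
the primes except at `halt`, where the labels `ℓ ≠ ℓ′` differ; so a bisimulation relating them
forces the machine to take a step and relates the successor configuration, and by induction the
machine never halts. -/

theorem isBisim_of_ichoice_or_sassert {Sg : Sig} {R : STy → STy → Prop}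
    (h : ∀ A B, R A B →
      (∃ LA LB, unfoldT Sg A = .ichoice LA ∧ unfoldT Sg B = .ichoice LB ∧ MatchAlts R LA LB) ∨
      (∃ φ A' B', A = .sassert φ A' ∧ B = .sassert φ B' ∧ (φ.holds σ0 → R A' B'))) :
    IsBisim Sg R := by
  intro A B hAB
  rcases h A B hAB with ⟨LA, LB, hA, hB, hM⟩ | ⟨φ, A', B', rfl, rfl, hφ⟩
  · simp only [hA, hB, reduceCtorEq, false_implies, implies_true, STy.ichoice.injEq,
      exists_eq_left', forall_eq', hM, and_true]
  · simp only [unfoldT, reduceCtorEq, false_implies, implies_true, STy.sassert.injEq,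
      true_and, and_true, and_imp, forall_eq', forall_apply_eq_imp_iff]
    exact ⟨φ, B', ⟨rfl, rfl⟩, (em _).imp (fun h => ⟨h, h, hφ h⟩) fun h => ⟨h, h⟩⟩

theorem matchAlts_map_iff {α : Type*} {R : STy → STy → Prop} {L : List α} {ℓ : α → ℕ}
    {f g : α → STy} :
    MatchAlts R (L.map fun a => (ℓ a, f a)) (L.map fun a => (ℓ a, g a)) ↔
      ∀ a ∈ L, R (f a) (g a) := by
  simp [MatchAlts, List.forall₂_map_left_iff, List.forall₂_map_right_iff, List.forall₂_same]

theorem flatten_map_pair_getElem? {α β : Type*} (f g : α → β) (L : List α) (j : ℕ) :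
    (L.map fun a => [f a, g a]).flatten[2 * j]? = L[j]?.map f ∧
      (L.map fun a => [f a, g a]).flatten[2 * j + 1]? = L[j]?.map g := by
  induction L generalizing j with
  | nil => simp
  | cons a L ih =>
    cases j with
    | zero => simp
    | succ j => simpa [Nat.mul_succ] using ih j

theorem iterM_succ_right (M : List Instr) (n : ℕ) (c : MConfig) :
    iterM M (n + 1) c = (iterM M n c).bind (stepM M) := by
  induction n generalizing c with
  | zero => cases h : stepM M c <;> simp [iterM, h]
  | succ n ih =>
    change (stepM M c).bind (iterM M (n + 1)) = ((stepM M c).bind (iterM M n)).bind (stepM M)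
    cases stepM M c with
    | none => rfl
    | some c' => exact ih c'

theorem isSome_iterM_of_stepM {M : List Instr} {c c' : MConfig} (hs : stepM M c = some c')
    (hinf : ∀ n, (iterM M n c).isSome) (n : ℕ) : (iterM M n c').isSome := by
  simpa [iterM, hs] using hinf (n + 1)

theorem exists_instr_of_stepM_isSome {M : List Instr} {i c₁ c₂ : ℕ}
    (hs : (stepM M (i, c₁, c₂)).isSome) : ∃ ins, M[i - 1]? = some ins ∧ ins ≠ .halt := by
  rcases hg : M[i - 1]? with _ | ins
  · simp [stepM, hg] at hs
  · refine ⟨ins, rfl, ?_⟩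
    rintro rfl
    simp [stepM, hg] at hs

/-- `T_i[c₁,c₂]`, or `T_i′[c₁,c₂]` when `pr = true`, for the configuration `(i, c₁, c₂)`. -/
def cfgType (pr : Bool) : MConfig → STy
  | (i, c₁, c₂) => .tname (nameOf pr i) [.const c₁, .const c₂]

/-- An alternative `label : ?{guard}. T_target` of an instruction body; `guard = none` means
that there is no assertion. -/
structure Branch where
  label : ℕ
  guard : Option AProp
  target : MConfig

namespace Branch

def type (pr : Bool) (b : Branch) : STy :=
  match b.guard with
  | none => cfgType pr b.target
  | some φ => .sassert φ (cfgType pr b.target)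

def Enabled (b : Branch) : Prop := ∀ φ ∈ b.guard, φ.holds σ0

end Branch

def branches : Instr → ℕ → ℕ → List Branch
  | .inc false k, c₁, c₂ => [⟨2, none, (k, c₁ + 1, c₂)⟩]
  | .inc true k, c₁, c₂ => [⟨3, none, (k, c₁, c₂ + 1)⟩]
  | .jzdec false k l, c₁, c₂ =>
      [⟨4, some (.aeq (.const c₁) (.const 0)), (k, c₁, c₂)⟩,
       ⟨5, some (.agt (.const c₁) (.const 0)), (l, c₁ - 1, c₂)⟩]
  | .jzdec true k l, c₁, c₂ =>
      [⟨6, some (.aeq (.const c₂) (.const 0)), (k, c₁, c₂)⟩,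
       ⟨7, some (.agt (.const c₂) (.const 0)), (l, c₁, c₂ - 1)⟩]
  | .halt, _, _ => []

section Branches

variable {M : List Instr} {ins : Instr} {i c₁ c₂ : ℕ} {b : Branch}

theorem stepM_eq_target (hg : M[i - 1]? = some ins) (hb : b ∈ branches ins c₁ c₂)
    (hen : b.Enabled) : stepM M (i, c₁, c₂) = some b.target := by
  rcases ins with ⟨_ | _, k⟩ | ⟨_ | _, k, l⟩ | _ <;>
    simp only [branches, List.mem_cons, List.not_mem_nil, or_false] at hb <;>
    rcases hb with rfl | rfl <;>
    simp_all [Branch.Enabled, stepM, AProp.holds, AExp.eval, Nat.pos_iff_ne_zero]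

theorem exists_enabled (hins : ins ≠ .halt) : ∃ b ∈ branches ins c₁ c₂, b.Enabled := by
  rcases ins with ⟨_ | _, k⟩ | ⟨_ | _, k, l⟩ | _ <;>
    simp [branches, Branch.Enabled, AProp.holds, AExp.eval] at hins ⊢ <;> omega

theorem target_mem_range {m : ℕ} (hwf : WFInstr m ins) (hb : b ∈ branches ins c₁ c₂) :
    1 ≤ b.target.1 ∧ b.target.1 ≤ m := by
  rcases ins with ⟨_ | _, k⟩ | ⟨_ | _, k, l⟩ | _ <;>
    simp only [branches, List.mem_cons, List.not_mem_nil, or_false] at hb <;>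
    rcases hb with rfl | rfl <;>
    simp_all [WFInstr]

end Branches

abbrev cfgArgs (c₁ c₂ : ℕ) : ℕ → AExp := fun n => [AExp.const c₁, .const c₂].getD n (.const 0)

theorem unfoldT_cfgType {M : List Instr} {ins : Instr} {i : ℕ} (hi : 1 ≤ i)
    (hg : M[i - 1]? = some ins) (pr : Bool) (c₁ c₂ : ℕ) :
    unfoldT (sigOf M) (cfgType pr (i, c₁, c₂)) = (instrBody pr ins).subst (cfgArgs c₁ c₂) := by
  obtain ⟨j, rfl⟩ : ∃ j, i = j + 1 := ⟨i - 1, by omega⟩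
  have hflat := flatten_map_pair_getElem? (instrBody false) (instrBody true) M j
  show ((sigOf M).getD (nameOf pr (j + 1)) .one).subst _ = _
  congr 1
  cases pr <;> simp_all [sigOf, nameOf, List.getD_eq_getElem?_getD, Nat.mul_succ]

theorem instrBody_subst {ins : Instr} (hins : ins ≠ .halt) (pr : Bool) (c₁ c₂ : ℕ) :
    (instrBody pr ins).subst (cfgArgs c₁ c₂) =
      .ichoice ((branches ins c₁ c₂).map fun b => (b.label, b.type pr)) := by
  rcases ins with ⟨_ | _, k⟩ | ⟨_ | _, k, l⟩ | _ <;>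
    simp_all [instrBody, branches, Branch.type, cfgType, STy.subst, AProp.subst, AExp.substN,
      AExp.subst, AExp.norm, AExp.hasVar, AExp.eval]

theorem unfoldT_cfgType_of_ne_halt {M : List Instr} {ins : Instr} {i : ℕ} (hi : 1 ≤ i)
    (hg : M[i - 1]? = some ins) (hins : ins ≠ .halt) (pr : Bool) (c₁ c₂ : ℕ) :
    unfoldT (sigOf M) (cfgType pr (i, c₁, c₂)) =
      .ichoice ((branches ins c₁ c₂).map fun b => (b.label, b.type pr)) := by
  rw [unfoldT_cfgType hi hg, instrBody_subst hins]

theorem instrBody_halt_subst (pr : Bool) (τ : ℕ → AExp) :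
    (instrBody pr .halt).subst τ = instrBody pr .halt := by
  cases pr <;> simp [instrBody, STy.subst]

theorem Branch.rel_target {Sg : Sig} {R : STy → STy → Prop} (hR : IsBisim Sg R) {b : Branch}
    (hb : R (b.type false) (b.type true)) (hen : b.Enabled) :
    R (cfgType false b.target) (cfgType true b.target) := by
  rcases b with ⟨ℓ, _ | φ, c⟩
  · exact hb
  · obtain ⟨ψ, B, hB, hcase⟩ := (hR hb).2.2.2.2.2.1 φ _ rfl
    cases hB
    rcases hcase with ⟨-, -, h⟩ | ⟨hn, -⟩
    · exact h
    · exact absurd (hen φ rfl) hn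

inductive NonHaltingRel (M : List Instr) : STy → STy → Prop
  | cfg (c : MConfig) (h1 : 1 ≤ c.1) (hinf : ∀ n, (iterM M n c).isSome) :
      NonHaltingRel M (cfgType false c) (cfgType true c)
  | sassert (φ : AProp) (A B : STy) (h : φ.holds σ0 → NonHaltingRel M A B) :
      NonHaltingRel M (.sassert φ A) (.sassert φ B)

theorem isBisim_nonHaltingRel {M : List Instr} (hwf : ∀ ins ∈ M, WFInstr M.length ins) :
    IsBisim (sigOf M) (NonHaltingRel M) := by
  refine isBisim_of_ichoice_or_sassert fun A B hAB => ?_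
  rcases hAB with ⟨⟨i, c₁, c₂⟩, h1, hinf⟩ | ⟨φ, A, B, h⟩
  · obtain ⟨ins, hg, hins⟩ := exists_instr_of_stepM_isSome (by simpa [iterM] using hinf 1)
    have hunfold (pr : Bool) := unfoldT_cfgType_of_ne_halt h1 hg hins pr c₁ c₂
    refine Or.inl ⟨_, _, hunfold false, hunfold true, matchAlts_map_iff.2 fun b hb => ?_⟩
    have hstep := stepM_eq_target hg hb
    have htarget := (target_mem_range (hwf ins (List.mem_of_getElem? hg)) hb).1
    rcases b with ⟨ℓ, _ | φ, c⟩
    · exact .cfg c htarget (isSome_iterM_of_stepM (hstep (by simp [Branch.Enabled])) hinf)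
    · exact .sassert φ _ _ fun hφ =>
        .cfg c htarget (isSome_iterM_of_stepM (hstep (by simpa [Branch.Enabled])) hinf)
  · exact Or.inr ⟨φ, A, B, rfl, rfl, h⟩

theorem exists_stepM_of_isBisim {M : List Instr} (hwf : ∀ ins ∈ M, WFInstr M.length ins)
    {R : STy → STy → Prop} (hR : IsBisim (sigOf M) R) {c : MConfig} (h1 : 1 ≤ c.1)
    (h2 : c.1 ≤ M.length) (hr : R (cfgType false c) (cfgType true c)) :
    ∃ c', stepM M c = some c' ∧ (1 ≤ c'.1 ∧ c'.1 ≤ M.length) ∧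
      R (cfgType false c') (cfgType true c') := by
  obtain ⟨i, c₁, c₂⟩ := c
  obtain ⟨ins, hg⟩ : ∃ ins, M[i - 1]? = some ins :=
    ⟨_, List.getElem?_eq_getElem (by simp only at h1 h2; omega)⟩
  by_cases hins : ins = .halt
  · subst hins
    obtain ⟨L', hL', hM⟩ := (hR hr).1 [(0, .tname 0 [])]
      (by rw [unfoldT_cfgType h1 hg, instrBody_halt_subst]; rfl)
    rw [unfoldT_cfgType h1 hg, instrBody_halt_subst] at hL'
    cases hL'
    simp [MatchAlts] at hM
  · have hunfold (pr : Bool) := unfoldT_cfgType_of_ne_halt h1 hg hins pr c₁ c₂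
    obtain ⟨L', hL', hM⟩ := (hR hr).1 _ (hunfold false)
    rw [hunfold true, STy.ichoice.injEq] at hL'
    subst hL'
    obtain ⟨b, hb, hen⟩ := exists_enabled (c₁ := c₁) (c₂ := c₂) hins
    exact ⟨b.target, stepM_eq_target hg hb hen,
      target_mem_range (hwf ins (List.mem_of_getElem? hg)) hb,
      Branch.rel_target hR (matchAlts_map_iff.1 hM b hb) hen⟩

/-- reduction from two-counter machines to type equality.
`T₁[m₀,n₀] ≡ T₁′[m₀,n₀]` holds iff the computation of `M` from the
configuration `(1, m₀, n₀)` is infinite, i.e. `M` does not halt. -/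
theorem reduction_two_counter (M : List Instr) (hne : M ≠ [])
    (hwf : ∀ ins ∈ M, WFInstr M.length ins) (m₀ n₀ : ℕ) :
    TpEq (sigOf M)
        (.tname (nameOf false 1) [.const m₀, .const n₀])
        (.tname (nameOf true 1) [.const m₀, .const n₀]) ↔
      (∀ n : ℕ, (iterM M n (1, m₀, n₀)).isSome) := by
  constructor
  · rintro ⟨R, hR, hr⟩
    have hrun : ∀ n, ∃ c, iterM M n (1, m₀, n₀) = some c ∧ (1 ≤ c.1 ∧ c.1 ≤ M.length) ∧
        R (cfgType false c) (cfgType true c) := by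
      intro n
      induction n with
      | zero => exact ⟨_, rfl, ⟨le_rfl, List.length_pos_iff.2 hne⟩, hr⟩
      | succ n ih =>
        obtain ⟨c, hc, hrange, hrc⟩ := ih
        obtain ⟨c', hstep, hrange', hrc'⟩ := exists_stepM_of_isBisim hwf hR hrange.1 hrange.2 hrc
        exact ⟨c', by rw [iterM_succ_right, hc, Option.bind_some, hstep], hrange', hrc'⟩
    intro n
    obtain ⟨c, hc, -⟩ := hrun n
    simp [hc]
  · exact fun hinf => ⟨_, isBisim_nonHaltingRel hwf, .cfg (1, m₀, n₀) le_rfl hinf⟩
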